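/- (Counting of green nodes at depth d.) Let l ≥ 2, let m, n ≥ 2l − 3, set N = m + n − l, and let 0 ≤ d ≤ l − 1. Then the number of Brauer representation triples γ for the pair (m, n−d) with ht(γ) ≤ N which possess at least one N-excluded ancestor (at some depth d' > d) equals Z_univ(l − d − 1). -/

import Mathlib

/-! Along the parent relation `ht + k` never increases, and it is preserved by the parent
that lowers `k` by one and adds a part `1` to `γ₊`. Hence a triple with `ht γ ≤ N` has an
`N`-excluded ancestor iff `N < ht γ + k`.

Stripping the first columns off `γ₊` and `γ₋` leaves partitions of `a = |γ₊| - ℓ(γ₊)` and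
`b = |γ₋| - ℓ(γ₋)`, and `ht γ ≤ N < ht γ + k` becomes `l ≤ d + 2k + a + b` and
`d + k + a + b < l`. With `j = l - 1 - d - k - a - b` and `Δ = k - j` these say exactly
`1 ≤ Δ` and `Δ + 2j + a + b = l - d - 1`; the bounds `m, n ≥ 2l - 3` are what allow the
columns to be put back, so this is a bijection onto the quadruples counted by `Zuniv`. -/

/-- A Brauer representation triple for the pair `(m, n)`: a natural number
`k ≤ min m n`, a partition `γ₊` of `m - k` and a partition `γ₋` of `n - k`. -/
structure BRT (m n : ℕ) where
  k : ℕ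
  k_le : k ≤ min m n
  gp : Nat.Partition (m - k)
  gm : Nat.Partition (n - k)

namespace BRT

/-- The height of a Brauer representation triple: the total number of parts of the
two partitions (the sum of the first-column lengths of the Young diagrams). -/
def ht {m n : ℕ} (γ : BRT m n) : ℕ :=
  Multiset.card γ.gp.parts + Multiset.card γ.gm.parts

end BRT

/-- `AddBox lam mu` : the multiset of parts `mu` is obtained from the multiset of parts
`lam` by adding one box to the Young diagram (either as a new part equal to `1`, or by
increasing one existing part by `1`). -/
def AddBox (lam mu : Multiset ℕ) : Prop :=
  mu = 1 ::ₘ lam ∨ ∃ a ∈ lam, mu = (a + 1) ::ₘ lam.erase a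

/-- `γ'` (a triple at depth `d+1`) is a parent of `γ` (a triple at depth `d`):
either (a) `k' = k`, `γ₊' = γ₊` and `γ₋` is obtained from `γ₋'` by adding one box, or
(b) `k' = k - 1`, `γ₋' = γ₋` and `γ₊'` is obtained from `γ₊` by adding one box. -/
def IsParent {m n₁ n₂ : ℕ} (γ : BRT m n₁) (γ' : BRT m n₂) : Prop :=
  (γ'.k = γ.k ∧ γ'.gp.parts = γ.gp.parts ∧ AddBox γ'.gm.parts γ.gm.parts)
  ∨ (γ'.k = γ.k - 1 ∧ γ'.gm.parts = γ.gm.parts ∧ AddBox γ.gp.parts γ'.gp.parts)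

/-- `IsAncestor m n d d' γ γ'` : the triple `γ'` at depth `d'` for the pair `(m,n)` is an
ancestor of the triple `γ` at depth `d`, i.e. `γ'` is reachable from `γ` by iterating
the parent relation `d' - d` times (one step for each unit increase of depth). -/
inductive IsAncestor (m n : ℕ) : ∀ (d d' : ℕ), BRT m (n - d) → BRT m (n - d') → Prop
  | step {d : ℕ} (γ : BRT m (n - d)) (γ' : BRT m (n - (d + 1))) :
      IsParent γ γ' → IsAncestor m n d (d + 1) γ γ'
  | tail {d d' : ℕ} {γ : BRT m (n - d)} {γ' : BRT m (n - d')} (γ'' : BRT m (n - (d' + 1))) :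
      IsAncestor m n d d' γ γ' → IsParent γ' γ'' → IsAncestor m n d (d' + 1) γ γ''

/-- `Zuniv s` : the number of quadruples `(Δ, k, λ₁, λ₂)` with `Δ ≥ 1`, `k ≥ 0` natural
numbers and `λ₁, λ₂` partitions (of arbitrary natural numbers) such that
`Δ + 2k + |λ₁| + |λ₂| = s`. -/
noncomputable def Zuniv (s : ℕ) : ℕ :=
  Nat.card {q : (ℕ × ℕ) × (Σ a : ℕ, Nat.Partition a) × (Σ a : ℕ, Nat.Partition a) //
    1 ≤ q.1.1 ∧ q.1.1 + 2 * q.1.2 + q.2.1.1 + q.2.2.1 = s}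

/-- `p a` : the number of partitions of `a` (with `p 0 = 1`). -/
def p (a : ℕ) : ℕ := Fintype.card (Nat.Partition a)

open Multiset

namespace Multiset

def dropColumn (s : Multiset ℕ) : Multiset ℕ := (s.map (· - 1)).filter (· ≠ 0)

def addColumn (s : Multiset ℕ) (c : ℕ) : Multiset ℕ := s.map (· + 1) + replicate c 1

variable {s : Multiset ℕ}

lemma pos_of_mem_dropColumn {x : ℕ} (hx : x ∈ s.dropColumn) : 0 < x :=
  Nat.pos_of_ne_zero (mem_filter.1 hx).2

lemma dropColumn_eq_map_filter (hs : ∀ x ∈ s, 0 < x) :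
    s.dropColumn = (s.filter (· ≠ 1)).map (· - 1) := by
  rw [dropColumn, filter_map]
  congr 1
  refine filter_congr fun x hx => ?_
  have := hs x hx
  simp only [Function.comp_apply]
  omega

lemma card_dropColumn_le : card s.dropColumn ≤ card s :=
  (card_le_card (filter_le _ _)).trans (card_map _ _).le

lemma sum_dropColumn_add_card (hs : ∀ x ∈ s, 0 < x) :
    s.dropColumn.sum + card s = s.sum := by
  induction s using Multiset.induction with
  | empty => simp [dropColumn]
  | cons a s ih =>
    have ha := hs a (mem_cons_self a s)
    have := ih fun x hx => hs x (mem_cons_of_mem hx)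
    rw [dropColumn] at this ⊢
    rw [map_cons, filter_cons, sum_add, card_cons, sum_cons]
    split_ifs <;> simp only [sum_singleton, sum_zero] <;> omega

lemma pos_of_mem_addColumn {c x : ℕ} (hx : x ∈ s.addColumn c) : 0 < x := by
  rcases mem_add.1 hx with hx | hx
  · obtain ⟨y, -, rfl⟩ := mem_map.1 hx
    exact y.succ_pos
  · rw [eq_of_mem_replicate hx]
    exact one_pos

lemma card_addColumn (c : ℕ) : card (s.addColumn c) = card s + c := by
  simp [addColumn]

lemma sum_addColumn (c : ℕ) : (s.addColumn c).sum = s.sum + card s + c := by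
  simp [addColumn, sum_map_add, add_assoc]

lemma dropColumn_addColumn (hs : ∀ x ∈ s, 0 < x) (c : ℕ) : (s.addColumn c).dropColumn = s := by
  simp only [dropColumn, addColumn, map_add, map_map, map_replicate, filter_add]
  rw [filter_eq_self.2 (by simpa using fun x hx => (hs x hx).ne'),
    filter_eq_nil.2 fun x hx => by simp [eq_of_mem_replicate hx]]
  simp

lemma addColumn_dropColumn (hs : ∀ x ∈ s, 0 < x) {c : ℕ} (hc : card s.dropColumn + c = card s) :
    s.dropColumn.addColumn c = s := by
  have hones : replicate c 1 = s.filter (¬ · ≠ 1) := by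
    refine (eq_replicate.2 ⟨?_, fun x hx => ?_⟩).symm
    · have := congrArg card (filter_add_not (· ≠ 1) s)
      rw [card_add, dropColumn_eq_map_filter hs, card_map] at *
      omega
    · simpa using of_mem_filter hx
  rw [addColumn, hones, dropColumn_eq_map_filter hs, map_map, map_congr rfl, map_id',
    filter_add_not]
  intro x hx
  have := hs x (mem_of_mem_filter hx)
  have := of_mem_filter hx
  simp only [Function.comp_apply]
  omega

end Multiset

namespace Nat.Partition

lemma card_parts_le {n : ℕ} (π : n.Partition) : card π.parts ≤ n := by
  simpa [π.parts_sum] using card_nsmul_le_sum fun _ => π.parts_pos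

def dropColumn {n : ℕ} (π : n.Partition) : (n - card π.parts).Partition where
  parts := π.parts.dropColumn
  parts_pos := pos_of_mem_dropColumn
  parts_sum := by
    have := sum_dropColumn_add_card fun _ => π.parts_pos
    have := π.parts_sum
    omega

def addColumn {a : ℕ} (μ : a.Partition) {n : ℕ} (h : a + card μ.parts ≤ n) : n.Partition where
  parts := μ.parts.addColumn (n - a - card μ.parts)
  parts_pos := pos_of_mem_addColumn
  parts_sum := by
    rw [sum_addColumn, μ.parts_sum]
    omega

lemma card_parts_addColumn {a n : ℕ} (μ : a.Partition) (h : a + card μ.parts ≤ n) :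
    card (μ.addColumn h).parts = n - a := by
  rw [addColumn, Multiset.card_addColumn]
  omega

lemma sigma_ext {x y : Σ n : ℕ, n.Partition} (h : x.2.parts = y.2.parts) : x = y := by
  obtain ⟨a, μ⟩ := x
  obtain ⟨b, ν⟩ := y
  obtain rfl : a = b := μ.parts_sum.symm.trans (h ▸ ν.parts_sum)
  exact congrArg _ (Nat.Partition.ext h)

end Nat.Partition

namespace BRT

lemma ext_parts {m n : ℕ} {γ γ' : BRT m n} (hk : γ.k = γ'.k) (hp : γ.gp.parts = γ'.gp.parts)
    (hg : γ.gm.parts = γ'.gm.parts) : γ = γ' := by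
  cases γ
  cases γ'
  dsimp only at hk hp hg
  subst hk
  rw [Nat.Partition.ext hp, Nat.Partition.ext hg]

end BRT

lemma AddBox.sum_eq {lam mu : Multiset ℕ} (h : AddBox lam mu) : mu.sum = lam.sum + 1 := by
  rcases h with rfl | ⟨a, ha, rfl⟩
  · rw [sum_cons, add_comm]
  · conv_rhs => rw [← cons_erase ha, sum_cons]
    rw [sum_cons]
    omega

lemma AddBox.card_le_card_add_one {lam mu : Multiset ℕ} (h : AddBox lam mu) :
    card mu ≤ card lam + 1 := by
  rcases h with rfl | ⟨a, ha, rfl⟩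
  · rw [card_cons]
  · rw [card_cons, card_erase_add_one ha]
    exact Nat.le_succ _

lemma AddBox.card_le_card {lam mu : Multiset ℕ} (h : AddBox lam mu) : card lam ≤ card mu := by
  rcases h with rfl | ⟨a, ha, rfl⟩
  · exact (card_cons 1 lam).symm ▸ Nat.le_succ _
  · rw [card_cons, card_erase_add_one ha]

lemma IsParent.ht_add_k_le {m n₁ n₂ : ℕ} {γ : BRT m n₁} {γ' : BRT m n₂} (h : IsParent γ γ') :
    γ'.ht + γ'.k ≤ γ.ht + γ.k := by
  unfold BRT.ht
  rcases h with ⟨hk, hp, hb⟩ | ⟨hk, hm, hb⟩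
  · have := hb.card_le_card
    have := congrArg card hp
    omega
  · have hsum := hb.sum_eq
    rw [γ.gp.parts_sum, γ'.gp.parts_sum] at hsum
    have := hb.card_le_card_add_one
    have := γ.k_le
    have := congrArg card hm
    omega

lemma IsAncestor.ht_add_k_le {m n d d' : ℕ} {γ : BRT m (n - d)} {γ' : BRT m (n - d')}
    (h : IsAncestor m n d d' γ γ') : γ'.ht + γ'.k ≤ γ.ht + γ.k := by
  induction h with
  | step _ _ hp => exact hp.ht_add_k_le
  | tail _ _ hp ih => exact hp.ht_add_k_le.trans ih

lemma BRT.exists_parent_ht_succ {m n e : ℕ} (γ : BRT m (n - e)) (hk : 0 < γ.k) :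
    ∃ γ' : BRT m (n - (e + 1)), IsParent γ γ' ∧ γ'.k = γ.k - 1 ∧ γ'.ht = γ.ht + 1 := by
  have := γ.k_le
  refine ⟨⟨γ.k - 1, by omega, ⟨1 ::ₘ γ.gp.parts, ?_, ?_⟩, ⟨γ.gm.parts, γ.gm.parts_pos, ?_⟩⟩,
    Or.inr ⟨rfl, rfl, Or.inl rfl⟩, rfl, ?_⟩
  · rintro i hi
    rcases mem_cons.1 hi with rfl | hi
    exacts [one_pos, γ.gp.parts_pos hi]
  · rw [sum_cons, γ.gp.parts_sum]
    omega
  · rw [γ.gm.parts_sum]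
    omega
  · simp only [BRT.ht, card_cons]
    omega

lemma BRT.exists_ancestor_ht_eq {m n d : ℕ} (γ : BRT m (n - d)) {j : ℕ} (hj : j < γ.k) :
    ∃ γ' : BRT m (n - (d + (j + 1))), IsAncestor m n d (d + (j + 1)) γ γ' ∧
      γ'.k = γ.k - (j + 1) ∧ γ'.ht = γ.ht + (j + 1) := by
  induction j with
  | zero =>
    obtain ⟨γ', hp, hk, hht⟩ := γ.exists_parent_ht_succ (by omega)
    exact ⟨γ', .step γ γ' hp, hk, hht⟩
  | succ j ih =>
    obtain ⟨γ', ha, hk, hht⟩ := ih (by omega)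
    obtain ⟨γ'', hp, hk', hht'⟩ := γ'.exists_parent_ht_succ (by omega)
    exact ⟨γ'', .tail γ'' ha hp, by omega, by omega⟩

lemma exists_ancestor_lt_ht_iff {m n d N : ℕ} (γ : BRT m (n - d)) (hγ : γ.ht ≤ N) :
    (∃ d' : ℕ, ∃ γ' : BRT m (n - d'), IsAncestor m n d d' γ γ' ∧ N < γ'.ht) ↔
      N < γ.ht + γ.k := by
  constructor
  · rintro ⟨d', γ', ha, hN⟩
    have := ha.ht_add_k_le
    omega
  · intro hN
    obtain ⟨γ', ha, -, hht⟩ := γ.exists_ancestor_ht_eq (j := γ.k - 1) (by omega)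
    exact ⟨_, γ', ha, by omega⟩

def greenEquiv {m n l d : ℕ} (hm : 2 * l - 3 ≤ m) (hn : 2 * l - 3 ≤ n) :
    {γ : BRT m (n - d) // γ.ht ≤ m + n - l ∧ m + n - l < γ.ht + γ.k} ≃
    {q : (ℕ × ℕ) × (Σ a : ℕ, Nat.Partition a) × (Σ a : ℕ, Nat.Partition a) //
      1 ≤ q.1.1 ∧ q.1.1 + 2 * q.1.2 + q.2.1.1 + q.2.2.1 = l - d - 1} where
  toFun γ :=
    let j := l - 1 - d - γ.1.k - (m - γ.1.k - card γ.1.gp.parts)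
      - (n - d - γ.1.k - card γ.1.gm.parts)
    ⟨((γ.1.k - j, j), ⟨_, γ.1.gp.dropColumn⟩, ⟨_, γ.1.gm.dropColumn⟩), by
      have := γ.2
      have := γ.1.k_le
      have := γ.1.gp.card_parts_le
      have := γ.1.gm.card_parts_le
      simp only [BRT.ht] at *
      omega⟩
  invFun
    | ⟨((Δ, j), ⟨a, μ⟩, ⟨b, ν⟩), hq⟩ =>
      have := μ.card_parts_le
      have := ν.card_parts_le
      ⟨{ k := Δ + j
         k_le := by simp only at hq; omega
         gp := μ.addColumn (n := m - (Δ + j)) (by simp only at hq; omega)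
         gm := ν.addColumn (n := n - d - (Δ + j)) (by simp only at hq; omega) }, by
        simp only [BRT.ht, Nat.Partition.card_parts_addColumn] at hq ⊢
        omega⟩
  left_inv := by
    rintro ⟨γ, hγ⟩
    have := γ.k_le
    have := γ.gp.card_parts_le
    have := γ.gm.card_parts_le
    have := card_dropColumn_le (s := γ.gp.parts)
    have := card_dropColumn_le (s := γ.gm.parts)
    simp only [BRT.ht] at hγ
    refine Subtype.ext (BRT.ext_parts ?_ ?_ ?_)
    · dsimp only
      omega
    · refine addColumn_dropColumn (fun _ => γ.gp.parts_pos) ?_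
      dsimp only [Nat.Partition.dropColumn]
      omega
    · refine addColumn_dropColumn (fun _ => γ.gm.parts_pos) ?_
      dsimp only [Nat.Partition.dropColumn]
      omega
  right_inv := by
    rintro ⟨⟨⟨Δ, j⟩, ⟨a, μ⟩, ⟨b, ν⟩⟩, hq⟩
    have := μ.card_parts_le
    have := ν.card_parts_le
    dsimp only at hq
    refine Subtype.ext (Prod.ext (Prod.ext ?_ ?_) (Prod.ext ?_ ?_))
    · simp only [Nat.Partition.card_parts_addColumn]
      omega
    · simp only [Nat.Partition.card_parts_addColumn]
      omega
    · exact Nat.Partition.sigma_ext (dropColumn_addColumn (fun _ => μ.parts_pos) _)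
    · exact Nat.Partition.sigma_ext (dropColumn_addColumn (fun _ => ν.parts_pos) _)

theorem stmt15_general (m n l d : ℕ) (hm : 2 * l - 3 ≤ m) (hn : 2 * l - 3 ≤ n) :
    Nat.card {γ : BRT m (n - d) //
        γ.ht ≤ m + n - l ∧
        ∃ d' : ℕ, ∃ γ' : BRT m (n - d'),
          IsAncestor m n d d' γ γ' ∧ m + n - l < γ'.ht}
      = Zuniv (l - d - 1) := by
  rw [Zuniv, ← Nat.card_congr (greenEquiv hm hn)]
  exact Nat.card_congr <| Equiv.subtypeEquivRight fun γ =>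
    and_congr_right (exists_ancestor_lt_ht_iff γ)

/-- Counting of green nodes at depth `d`: for `l ≥ 2`, `m, n ≥ 2l - 3`, `N = m + n - l`
and `0 ≤ d ≤ l - 1`, the number of Brauer representation triples `γ` for the pair
`(m, n - d)` with `ht(γ) ≤ N` which possess at least one `N`-excluded ancestor (at some
depth `d' > d`) equals `Z_univ(l - d - 1)`. -/
theorem stmt15 (m n l d : ℕ) (hl : 2 ≤ l) (hm : 2 * l - 3 ≤ m) (hn : 2 * l - 3 ≤ n)
    (hd : d ≤ l - 1) :
    Nat.card {γ : BRT m (n - d) //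
        γ.ht ≤ m + n - l ∧
        ∃ d' : ℕ, ∃ γ' : BRT m (n - d'),
          IsAncestor m n d d' γ γ' ∧ m + n - l < γ'.ht}
      = Zuniv (l - d - 1) :=
  stmt15_general m n l d hm hn
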